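/- Let R be a subdirect product of SBM algebras A_1, …, A_n, and let congruences α_l ≺ β_l ≤ θ_{A_l} be given for each l ∈ [n]. If coordinates i, j ∈ [n] (i ≠ j) are not ᾱβ̄-aligned in R, then the interval (α_i,β_i) can be separated from (α_j,β_j) in R. -/

import Mathlib

namespace SBMPaper

variable {A : Type*}

/-- A Mal'tsev operation: `m a b b = m b b a = a`. -/
def IsMaltsevOp (m : A → A → A → A) : Prop :=
  ∀ a b : A, m a b b = a ∧ m b b a = a

/-- Containment of binary relations. -/
def RelLE (α β : A → A → Prop) : Prop := ∀ a b : A, α a b → β a b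

/-- `p(β) ⊆ α` : the unary map `p` maps the relation `β` into `α`. -/
def PolMaps (p : A → A) (β α : A → A → Prop) : Prop :=
  ∀ a b : A, β a b → α (p a) (p b)

/-- `α ≺ β`: a prime (covering) interval with respect to the class `Cong` of congruences. -/
def PrimeCov (Cong : (A → A → Prop) → Prop) (α β : A → A → Prop) : Prop :=
  RelLE α β ∧ α ≠ β ∧
    ∀ γ : A → A → Prop, Cong γ → RelLE α γ → RelLE γ β → γ = α ∨ γ = β

/-- An `(α,β)`-minimal set with respect to the class `Pol` of unary polynomials:
an image `p(A)` of a unary polynomial with `p(β) ⊄ α`, minimal under inclusion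
among all such images. -/
def IsMinSetP (Pol : (A → A) → Prop) (α β : A → A → Prop) (U : Set A) : Prop :=
  (∃ p, Pol p ∧ Set.range p = U ∧ ¬ PolMaps p β α) ∧
  ∀ U' : Set A, (∃ p, Pol p ∧ Set.range p = U' ∧ ¬ PolMaps p β α) → U' ⊆ U → U' = U

/-- Unary polynomials of a Mal'tsev algebra `(A; m)`. -/
inductive MPol (m : A → A → A → A) : (A → A) → Prop
  | id : MPol m fun x => x
  | const (a : A) : MPol m fun _ => a
  | mc {p q r : A → A} : MPol m p → MPol m q → MPol m r →
      MPol m fun x => m (p x) (q x) (r x)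

/-- Congruences of a Mal'tsev algebra `(A; m)`. -/
def IsMCong (m : A → A → A → A) (α : A → A → Prop) : Prop :=
  Equivalence α ∧
  ∀ a a' b b' c c' : A, α a a' → α b b' → α c c' → α (m a b c) (m a' b' c')

/-- A congruence of an algebra with a binary operation `dot` and a ternary operation `m`. -/
def IsCong (dot : A → A → A) (m : A → A → A → A) (α : A → A → Prop) : Prop :=
  Equivalence α ∧
  (∀ a a' b b' : A, α a a' → α b b' → α (dot a b) (dot a' b')) ∧
  (∀ a a' b b' c c' : A, α a a' → α b b' → α c c' → α (m a b c) (m a' b' c'))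

/-- A semilattice block Mal'tsev (SBM) algebra `(A; dot, m)` with witnessing congruence `σ`:
`σ` is a congruence, the operation induced by `dot` on `A/σ` is a semilattice operation,
`dot` is the first projection on `σ`-blocks, `m` is Mal'tsev on `σ`-blocks,
`m(a,b,c) ≡_σ (a·b)·c`, and `x·(x·y) = x·y`. -/
def IsSBM (dot : A → A → A) (m : A → A → A → A) (σ : A → A → Prop) : Prop :=
  IsCong dot m σ ∧
  (∀ a b : A, σ (dot a b) (dot b a)) ∧
  (∀ a b c : A, σ (dot (dot a b) c) (dot a (dot b c))) ∧
  (∀ a b : A, σ a b → dot a b = a) ∧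
  (∀ a b : A, σ a b → m a b b = a ∧ m b b a = a) ∧
  (∀ a b c : A, σ (m a b c) (dot (dot a b) c)) ∧
  (∀ x y : A, dot x (dot x y) = dot x y)

/-- `a` belongs to the greatest `σ`-block `max(A)` of the semilattice `A/σ`. -/
def InMax (dot : A → A → A) (σ : A → A → Prop) (a : A) : Prop :=
  ∀ b : A, σ (dot b a) a

/-- The equivalence relation `θ_A` whose blocks are `max(A)` and the singletons outside it. -/
def ThetaA (dot : A → A → A) (σ : A → A → Prop) (a b : A) : Prop :=
  a = b ∨ (InMax dot σ a ∧ InMax dot σ b)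

/-- Unary polynomials of an SBM algebra `(A; dot, m)`. -/
inductive UPol (dot : A → A → A) (m : A → A → A → A) : (A → A) → Prop
  | id : UPol dot m fun x => x
  | const (a : A) : UPol dot m fun _ => a
  | dotc {p q : A → A} : UPol dot m p → UPol dot m q →
      UPol dot m fun x => dot (p x) (q x)
  | mc {p q r : A → A} : UPol dot m p → UPol dot m q → UPol dot m r →
      UPol dot m fun x => m (p x) (q x) (r x)

/-- `A` has a minimal (neutral) element. -/
def HasMinElt (dot : A → A → A) : Prop :=
  ∃ a : A, ∀ b : A, dot a b = b ∧ dot b a = b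

/-- `a` is an `αβ`-split element. -/
def IsSplit (dot : A → A → A) (α β : A → A → Prop) (a : A) : Prop :=
  ∃ b c : A, β b c ∧ ¬ α (dot a b) (dot a c)

/-- Unary polynomials of a binary relation `S ⊆ A × B`: pairs of maps generated from
the identity and the constant pairs taken from `S`, closed under coordinatewise
`dot` and `m`. -/
inductive BPol {B : Type*} (dA : A → A → A) (mA : A → A → A → A)
    (dB : B → B → B) (mB : B → B → B → B) (S : A → B → Prop) :
    (A → A) → (B → B) → Prop
  | id : BPol dA mA dB mB S (fun x => x) (fun y => y)
  | const (a : A) (b : B) (h : S a b) : BPol dA mA dB mB S (fun _ => a) (fun _ => b)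
  | dotc {p₁ q₁ : A → A} {p₂ q₂ : B → B} : BPol dA mA dB mB S p₁ p₂ →
      BPol dA mA dB mB S q₁ q₂ →
      BPol dA mA dB mB S (fun x => dA (p₁ x) (q₁ x)) (fun y => dB (p₂ y) (q₂ y))
  | mc {p₁ q₁ r₁ : A → A} {p₂ q₂ r₂ : B → B} : BPol dA mA dB mB S p₁ p₂ →
      BPol dA mA dB mB S q₁ q₂ → BPol dA mA dB mB S r₁ r₂ →
      BPol dA mA dB mB S (fun x => mA (p₁ x) (q₁ x) (r₁ x))
        (fun y => mB (p₂ y) (q₂ y) (r₂ y))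

section Subdirect

variable {n : ℕ} {F : Fin n → Type*}

/-- `R` is a subdirect product of the algebras `F 1, …, F n`. -/
def SubdirectProd (dot : ∀ i, F i → F i → F i) (m : ∀ i, F i → F i → F i → F i)
    (R : Set (∀ i, F i)) : Prop :=
  R.Nonempty ∧
  (∀ x ∈ R, ∀ y ∈ R, (fun i => dot i (x i) (y i)) ∈ R) ∧
  (∀ x ∈ R, ∀ y ∈ R, ∀ z ∈ R, (fun i => m i (x i) (y i) (z i)) ∈ R) ∧
  (∀ (i : Fin n) (a : F i), ∃ x ∈ R, x i = a)

/-- Unary polynomials of a relation `R`: families of maps generated from the identity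
family and constant families taken from `R`, closed under coordinatewise `dot` and `m`. -/
inductive RPol (dot : ∀ i, F i → F i → F i) (m : ∀ i, F i → F i → F i → F i)
    (R : Set (∀ i, F i)) : (∀ i, F i → F i) → Prop
  | id : RPol dot m R fun _ x => x
  | const (a : ∀ i, F i) (ha : a ∈ R) : RPol dot m R fun i _ => a i
  | dotc {p q : ∀ i, F i → F i} : RPol dot m R p → RPol dot m R q →
      RPol dot m R fun i x => dot i (p i x) (q i x)
  | mc {p q r : ∀ i, F i → F i} : RPol dot m R p → RPol dot m R q → RPol dot m R r →
      RPol dot m R fun i x => m i (p i x) (q i x) (r i x)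

/-- The interval `(α,β)` at coordinate `i` can be separated from `(γ,δ)` at
coordinate `j` in `R`. -/
def SepIn (dot : ∀ i, F i → F i → F i) (m : ∀ i, F i → F i → F i → F i)
    (R : Set (∀ i, F i)) (i : Fin n) (α β : F i → F i → Prop)
    (j : Fin n) (γ δ : F j → F j → Prop) : Prop :=
  ∃ p, RPol dot m R p ∧ ¬ PolMaps (p i) β α ∧ PolMaps (p j) δ γ

/-- `(i, α, β) ∈ I_R` : `α ≺ β ≤ θ_{A_i}` is a prime interval of congruences of `F i`. -/
def InIR (dot : ∀ i, F i → F i → F i) (m : ∀ i, F i → F i → F i → F i)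
    (σ : ∀ i, F i → F i → Prop) (i : Fin n) (α β : F i → F i → Prop) : Prop :=
  IsCong (dot i) (m i) α ∧ IsCong (dot i) (m i) β ∧
  PrimeCov (IsCong (dot i) (m i)) α β ∧ RelLE β (ThetaA (dot i) (σ i))

end Subdirect

section CSP

variable {V : Type*} {D : V → Type*}

/-- A constraint: a scope `W ⊆ V` together with a relation on `∏_{v ∈ W} D v`. -/
abbrev Constr (V : Type*) (D : V → Type*) := Σ W : Set V, Set (∀ v : W, D v.1)

/-- Solutions of the restricted instance `P_W` (recorded as full assignments;
only the values on `W` are constrained). -/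
def SolOn (C : Set (Constr V D)) (W : Set V) : Set (∀ v, D v) :=
  {φ | ∀ c ∈ C, ∃ x ∈ c.2, ∀ u : c.1, u.1 ∈ W → x u = φ u.1}

/-- The binary relation `S_{vw}` of partial solutions on `{v, w}`. -/
def SvwRel (C : Set (Constr V D)) (v w : V) (a : D v) (b : D w) : Prop :=
  ∃ φ ∈ SolOn C {v, w}, φ v = a ∧ φ w = b

/-- The instance is tightened : `A_v = S_v` for every variable `v`. -/
def Tight (C : Set (Constr V D)) : Prop :=
  ∀ (v : V) (a : D v), ∃ φ ∈ SolOn C {v}, φ v = a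

/-- The restricted instance `P_W` is minimal: every tuple of every constraint of `P_W`
extends to a solution of `P_W`. -/
def MinOn (C : Set (Constr V D)) (W : Set V) : Prop :=
  ∀ c ∈ C, ∀ x ∈ c.2, ∃ φ ∈ SolOn C W, ∀ u : c.1, u.1 ∈ W → φ u.1 = x u

/-- `k`-minimality: `P_W` is minimal for every `k`-element `W ⊆ V`. -/
def KMin (C : Set (Constr V D)) (k : ℕ) : Prop :=
  ∀ W : Set V, W.ncard = k → MinOn C W

/-- `(v, α, β) ∈ I_P` : `α ≺ β ≤ θ_{A_v}` is a prime interval of congruences of `D v`. -/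
def InIP (dot : ∀ v, D v → D v → D v) (m : ∀ v, D v → D v → D v → D v)
    (σ : ∀ v, D v → D v → Prop) (v : V) (α β : D v → D v → Prop) : Prop :=
  IsCong (dot v) (m v) α ∧ IsCong (dot v) (m v) β ∧
  PrimeCov (IsCong (dot v) (m v)) α β ∧ RelLE β (ThetaA (dot v) (σ v))

/-- `(α,β)` (at `v`) can be separated from `(γ,δ)` (at `w`) in `S_{vw}`. -/
def SepPair (dot : ∀ v, D v → D v → D v) (m : ∀ v, D v → D v → D v → D v)
    (C : Set (Constr V D)) (v : V) (α β : D v → D v → Prop)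
    (w : V) (γ δ : D w → D w → Prop) : Prop :=
  ∃ p q, BPol (dot v) (m v) (dot w) (m w) (SvwRel C v w) p q ∧
    ¬ PolMaps p β α ∧ PolMaps q δ γ

/-- The coherent set `W_{vαβ}`. -/
def WCoh (dot : ∀ v, D v → D v → D v) (m : ∀ v, D v → D v → D v → D v)
    (σ : ∀ v, D v → D v → Prop) (C : Set (Constr V D))
    (v : V) (α β : D v → D v → Prop) : Set V :=
  {w | ∃ γ δ : D w → D w → Prop, InIP dot m σ w γ δ ∧
    ¬ SepPair dot m C v α β w γ δ}

/-- Block-minimality: `P_{W_{vαβ}}` is minimal for every `(v,α,β) ∈ I_P`. -/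
def BlockMin (dot : ∀ v, D v → D v → D v) (m : ∀ v, D v → D v → D v → D v)
    (σ : ∀ v, D v → D v → Prop) (C : Set (Constr V D)) : Prop :=
  ∀ (v : V) (α β : D v → D v → Prop), InIP dot m σ v α β →
    MinOn C (WCoh dot m σ C v α β)

/-- A `ḡ`-ensemble for the instance `C`. -/
def IsEnsemble (dot : ∀ v, D v → D v → D v) (m : ∀ v, D v → D v → D v → D v)
    (σ : ∀ v, D v → D v → Prop) (C : Set (Constr V D))
    (g : ∀ u, D u → D u → Prop)
    (Φ : ∀ (v : V) (α β : D v → D v → Prop), InIP dot m σ v α β → ∀ u, D u) : Prop :=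
  (∀ (v : V) (α β : D v → D v → Prop) (h : InIP dot m σ v α β),
    Φ v α β h ∈ SolOn C (WCoh dot m σ C v α β)) ∧
  (∀ (v : V) (α β : D v → D v → Prop) (h : InIP dot m σ v α β)
      (w : V) (γ δ : D w → D w → Prop) (h' : InIP dot m σ w γ δ)
      (u : V), u ∈ WCoh dot m σ C v α β → u ∈ WCoh dot m σ C w γ δ →
    g u (Φ v α β h u) (Φ w γ δ h' u)) ∧
  (∀ c ∈ C, ∃ x ∈ c.2, ∀ (u : c.1) (v : V) (α β : D v → D v → Prop)
      (h : InIP dot m σ v α β), u.1 ∈ WCoh dot m σ C v α β →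
    g u.1 (x u) (Φ v α β h u.1))

end CSP

end SBMPaper

/-! If `a ∈ R` is split at `i` but not at `j`, the polynomial `w ↦ a · w` separates. Otherwise
fix `(x, y) ∈ β_i \ α_i`; we look for a polynomial that fixes `x` and `y` modulo `α_i` and
collapses `β_j` into `α_j`. For a family `𝒢` of polynomials, the pairs of `β_j` that every
`g ∈ 𝒢` sends to a pair collapsible by such a polynomial form a congruence between `α_j` and
`β_j`, hence equal one of them. For `𝒢` the polynomials collapsing `β_i` into `α_i` it is not
`α_j`: by finiteness some `g ∈ 𝒢` would fix an uncollapsible pair, which lies in the top block,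
and the Mal'tsev correction `w ↦ m(w, g(w)·T, g(z)·T)` collapses it while fixing `x, y`.
Precomposing with `w ↦ a · w`, which lies in `𝒢` while `a[j]` is split, carries this over to the
family of all polynomials, so every pair of `β_j` is collapsible; composing finitely many such
polynomials collapses all of `β_j` at once. -/

namespace SBMPaper

theorem exists_mem_fixed_of_forall_exists_mapsTo {Y : Type*} [Finite Y] {G : Set (Y → Y)}
    (hG : ∀ f ∈ G, ∀ g ∈ G, f ∘ g ∈ G) {B : Set Y} (hB : B.Nonempty)
    (h : ∀ b ∈ B, ∃ g ∈ G, g b ∈ B) : ∃ b ∈ B, ∃ g ∈ G, g b = b := by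
  -- a point of `B` with a minimal orbit `{g c | g ∈ G}` has the same orbit as its successor
  obtain ⟨c, hcB, hmin⟩ := exists_minimalFor_of_wellFoundedLT (· ∈ B) (fun b => (· b) '' G) hB
  obtain ⟨g, hg, hgc⟩ := h c hcB
  have hsub : (· (g c)) '' G ⊆ (· c) '' G := by
    rintro _ ⟨f, hf, rfl⟩
    exact ⟨f ∘ g, hG f hf g hg, rfl⟩
  obtain ⟨f, hf, hfc⟩ := hmin hgc hsub ⟨g, hg, rfl⟩
  exact ⟨g c, hgc, f, hf, hfc⟩

theorem exists_mem_forall_rel_of_forall_exists {Y : Type*} [Finite Y] {α β : Y → Y → Prop}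
    {N : Set (Y → Y)} (hid : id ∈ N) (hcomp : ∀ f ∈ N, ∀ g ∈ N, f ∘ g ∈ N)
    (hα : ∀ f ∈ N, ∀ u v, α u v → α (f u) (f v)) (hβ : ∀ f ∈ N, ∀ u v, β u v → β (f u) (f v))
    (h : ∀ u v, β u v → ∃ f ∈ N, α (f u) (f v)) :
    ∃ q ∈ N, ∀ u v, β u v → α (q u) (q v) := by
  classical
  have key : ∀ S : Finset (Y × Y), (∀ P ∈ S, β P.1 P.2) →
      ∃ q ∈ N, ∀ P ∈ S, α (q P.1) (q P.2) := by
    intro S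
    induction S using Finset.induction_on with
    | empty => exact fun _ => ⟨id, hid, by simp⟩
    | insert P S _ ih =>
      intro hS
      obtain ⟨q, hq, hqS⟩ := ih fun Q hQ => hS Q (Finset.mem_insert_of_mem hQ)
      obtain ⟨f, hf, hfP⟩ := h _ _ (hβ q hq _ _ (hS P (Finset.mem_insert_self P S)))
      refine ⟨f ∘ q, hcomp f hf q hq, ?_⟩
      simp only [Finset.mem_insert, forall_eq_or_imp, Function.comp_apply]
      exact ⟨hfP, fun Q hQ => hα f hf _ _ (hqS Q hQ)⟩
  have : Fintype Y := Fintype.ofFinite Y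
  obtain ⟨q, hq, hqβ⟩ := key (Finset.univ.filter fun P => β P.1 P.2) (by simp)
  exact ⟨q, hq, fun u v huv => hqβ (u, v) (by simpa using huv)⟩

theorem exists_rel_not_rel_of_primeCov {A : Type*} {Cong : (A → A → Prop) → Prop}
    {α β : A → A → Prop} (h : PrimeCov Cong α β) : ∃ u v, β u v ∧ ¬ α u v := by
  by_contra! hβα
  exact h.2.1 (funext₂ fun u v => propext ⟨h.1 u v, hβα u v⟩)

section SBM

variable {A : Type*} {dot : A → A → A} {m : A → A → A → A} {σ : A → A → Prop}

theorem inMax_of_rel_not_rel {α β : A → A → Prop} (hα : ∀ a, α a a)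
    (hβ : RelLE β (ThetaA dot σ)) {u v : A} (huv : β u v) (hnuv : ¬ α u v) :
    InMax dot σ u ∧ InMax dot σ v :=
  (hβ u v huv).resolve_left fun h => hnuv (h ▸ hα u)

theorem IsSBM.rel_of_inMax (hs : IsSBM dot m σ) {a b : A} (ha : InMax dot σ a)
    (hb : InMax dot σ b) : σ a b :=
  have e := hs.1.1
  e.trans (e.trans (e.symm (ha b)) (e.symm (hs.2.1 a b))) (hb a)

theorem IsSBM.inMax_dot (hs : IsSBM dot m σ) (w : A) {t : A} (ht : InMax dot σ t) :
    InMax dot σ (dot w t) := fun b =>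
  have e := hs.1.1
  e.trans (e.trans (e.symm (hs.2.2.1 b w t)) (ht (dot b w))) (e.symm (ht w))

theorem IsSBM.dot_eq_of_inMax (hs : IsSBM dot m σ) {u t : A} (hu : InMax dot σ u)
    (ht : InMax dot σ t) : dot u t = u :=
  hs.2.2.2.1 u t (hs.rel_of_inMax hu ht)

theorem IsSBM.m_right_eq_of_inMax (hs : IsSBM dot m σ) {a b : A} (ha : InMax dot σ a)
    (hb : InMax dot σ b) : m a b b = a :=
  (hs.2.2.2.2.1 a b (hs.rel_of_inMax ha hb)).1

theorem IsSBM.m_left_eq_of_inMax (hs : IsSBM dot m σ) {a b : A} (ha : InMax dot σ a)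
    (hb : InMax dot σ b) : m b b a = a :=
  (hs.2.2.2.2.1 a b (hs.rel_of_inMax ha hb)).2

theorem IsSBM.rel_dot_dot_of_rel_dot (hs : IsSBM dot m σ) {a t : A} (z : A)
    (h : σ (dot a t) t) : σ (dot a (dot t z)) (dot t z) :=
  have e := hs.1.1
  e.trans (e.symm (hs.2.2.1 a t z)) (hs.1.2.1 _ _ _ _ h (e.refl z))

theorem IsSBM.rel_dot_dot_self (hs : IsSBM dot m σ) (z t : A) :
    σ (dot z (dot t z)) (dot t z) := by
  have e := hs.1.1
  refine e.trans (hs.1.2.1 _ _ _ _ (e.refl z) (hs.2.1 t z)) ?_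
  rw [hs.2.2.2.2.2.2 z t]
  exact hs.2.1 z t

end SBM

section RPol

variable {n : ℕ} {F : Fin n → Type*} {dot : ∀ i, F i → F i → F i}
  {m : ∀ i, F i → F i → F i → F i} {R : Set (∀ i, F i)}

theorem RPol.comp {p q : ∀ l, F l → F l} (hp : RPol dot m R p) (hq : RPol dot m R q) :
    RPol dot m R fun l x => p l (q l x) := by
  induction hp with
  | id => exact hq
  | const a ha => exact RPol.const a ha
  | dotc _ _ ih₁ ih₂ => exact RPol.dotc ih₁ ih₂
  | mc _ _ _ ih₁ ih₂ ih₃ => exact RPol.mc ih₁ ih₂ ih₃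

theorem RPol.apply_mem (hR : SubdirectProd dot m R) {p : ∀ l, F l → F l}
    (hp : RPol dot m R p) {z : ∀ l, F l} (hz : z ∈ R) : (fun l => p l (z l)) ∈ R := by
  induction hp with
  | id => exact hz
  | const a ha => exact ha
  | dotc _ _ ih₁ ih₂ => exact hR.2.1 _ ih₁ _ ih₂
  | mc _ _ _ ih₁ ih₂ ih₃ => exact hR.2.2.1 _ ih₁ _ ih₂ _ ih₃

theorem RPol.map_rel {l : Fin n} {γ : F l → F l → Prop} (hγ : IsCong (dot l) (m l) γ)
    {p : ∀ l, F l → F l} (hp : RPol dot m R p) {u v : F l} (h : γ u v) :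
    γ (p l u) (p l v) := by
  induction hp with
  | id => exact h
  | const a _ => exact hγ.1.refl _
  | dotc _ _ ih₁ ih₂ => exact hγ.2.1 _ _ _ _ ih₁ ih₂
  | mc _ _ _ ih₁ ih₂ ih₃ => exact hγ.2.2 _ _ _ _ _ _ ih₁ ih₂ ih₃

/-- Since `R` is subdirect, every element of `F j` is the `j`-th coordinate of a constant
polynomial, so the operations can be varied in one argument at a time. -/
theorem isCong_of_forall_rpol (hR : SubdirectProd dot m R) {j : Fin n}
    {ξ : F j → F j → Prop} (he : Equivalence ξ)
    (hst : ∀ s, RPol dot m R s → ∀ u v, ξ u v → ξ (s j u) (s j v)) :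
    IsCong (dot j) (m j) ξ := by
  have lift := hR.2.2.2 j
  refine ⟨he, fun u u' v v' hu hv => ?_, fun u u' v v' w w' hu hv hw => ?_⟩
  · obtain ⟨b, hb, rfl⟩ := lift v
    obtain ⟨a', ha', rfl⟩ := lift u'
    exact he.trans (hst _ (RPol.dotc RPol.id (RPol.const b hb)) _ _ hu)
      (hst _ (RPol.dotc (RPol.const a' ha') RPol.id) _ _ hv)
  · obtain ⟨b, hb, rfl⟩ := lift v
    obtain ⟨c, hc, rfl⟩ := lift w
    obtain ⟨a', ha', rfl⟩ := lift u'
    obtain ⟨b', hb', rfl⟩ := lift v'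
    exact he.trans (hst _ (RPol.mc RPol.id (RPol.const b hb) (RPol.const c hc)) _ _ hu)
      (he.trans (hst _ (RPol.mc (RPol.const a' ha') RPol.id (RPol.const c hc)) _ _ hv)
        (hst _ (RPol.mc (RPol.const a' ha') (RPol.const b' hb') RPol.id) _ _ hw))

theorem exists_mem_forall_inMax [∀ l, Fintype (F l)] {σ : ∀ l, F l → F l → Prop}
    (hsbm : ∀ l, IsSBM (dot l) (m l) (σ l)) (hR : SubdirectProd dot m R) :
    ∃ T ∈ R, ∀ l, InMax (dot l) (σ l) (T l) := by
  classical
  -- `σ l (dot l z t) t` says `[z] ≤ [t]` in `F l / σ l`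
  have key : ∀ S : Finset (∀ l, F l), ↑S ⊆ R →
      ∃ t ∈ R, ∀ z ∈ S, ∀ l, σ l (dot l (z l) (t l)) (t l) := by
    intro S
    induction S using Finset.induction_on with
    | empty => exact fun _ => hR.1.elim fun t ht => ⟨t, ht, by simp⟩
    | insert z S _ ih =>
      intro hS
      rw [Finset.coe_insert, Set.insert_subset_iff] at hS
      obtain ⟨t, ht, htS⟩ := ih hS.2
      refine ⟨fun l => dot l (t l) (z l), hR.2.1 _ ht _ hS.1, ?_⟩
      simp only [Finset.mem_insert, forall_eq_or_imp]
      exact ⟨fun l => (hsbm l).rel_dot_dot_self _ _,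
        fun w hw l => (hsbm l).rel_dot_dot_of_rel_dot _ (htS w hw l)⟩
  obtain ⟨T, hT, hTR⟩ := key (Set.toFinite R).toFinset (by simp)
  refine ⟨T, hT, fun l b => ?_⟩
  obtain ⟨z, hz, rfl⟩ := hR.2.2.2 l b
  exact hTR z (by simpa using hz) l

end RPol

section Separation

variable {n : ℕ} {F : Fin n → Type*} {dot : ∀ i, F i → F i → F i}
  {m : ∀ i, F i → F i → F i → F i} {σ : ∀ i, F i → F i → Prop} {R : Set (∀ i, F i)}
  {i j : Fin n}

variable (dot m R) in
def CollapsesAt (i : Fin n) (α β : F i → F i → Prop) : Set (∀ l, F l → F l) :=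
  {p | RPol dot m R p ∧ PolMaps (p i) β α}

variable (dot m R) in
def FixesPairAt (i : Fin n) (α : F i → F i → Prop) (x y : F i) : Set (∀ l, F l → F l) :=
  {p | RPol dot m R p ∧ α (p i x) x ∧ α (p i y) y}

variable (dot m R) in
def CollapseRel (𝒢 : Set (∀ l, F l → F l)) (i : Fin n) (α : F i → F i → Prop) (x y : F i)
    (j : Fin n) (γ δ : F j → F j → Prop) (u v : F j) : Prop :=
  δ u v ∧ ∀ g ∈ 𝒢, ∃ h ∈ FixesPairAt dot m R i α x y, γ (h j (g j u)) (h j (g j v))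

theorem id_mem_fixesPairAt {α : F i → F i → Prop} (hα : IsCong (dot i) (m i) α) (x y : F i) :
    (fun _ z => z) ∈ FixesPairAt dot m R i α x y :=
  ⟨RPol.id, hα.1.refl x, hα.1.refl y⟩

theorem comp_mem_fixesPairAt {α : F i → F i → Prop} (hα : IsCong (dot i) (m i) α) {x y : F i}
    {h h' : ∀ l, F l → F l} (hh : h ∈ FixesPairAt dot m R i α x y)
    (hh' : h' ∈ FixesPairAt dot m R i α x y) :
    (fun l z => h l (h' l z)) ∈ FixesPairAt dot m R i α x y :=
  ⟨hh.1.comp hh'.1, hα.1.trans (hh.1.map_rel hα hh'.2.1) hh.2.1,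
    hα.1.trans (hh.1.map_rel hα hh'.2.2) hh.2.2⟩

theorem rpol_comp_mem_collapsesAt {α β : F i → F i → Prop} (hα : IsCong (dot i) (m i) α)
    {p g : ∀ l, F l → F l} (hp : RPol dot m R p) (hg : g ∈ CollapsesAt dot m R i α β) :
    (fun l z => p l (g l z)) ∈ CollapsesAt dot m R i α β :=
  ⟨hp.comp hg.1, fun u v huv => hp.map_rel hα (hg.2 u v huv)⟩

theorem comp_rpol_mem_collapsesAt {α β : F i → F i → Prop} (hβ : IsCong (dot i) (m i) β)
    {g s : ∀ l, F l → F l} (hg : g ∈ CollapsesAt dot m R i α β) (hs : RPol dot m R s) :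
    (fun l z => g l (s l z)) ∈ CollapsesAt dot m R i α β :=
  ⟨hg.1.comp hs, fun _ _ huv => hg.2 _ _ (hs.map_rel hβ huv)⟩

theorem collapseRel_eq_or_eq (hR : SubdirectProd dot m R) {α : F i → F i → Prop}
    (hα : IsCong (dot i) (m i) α) (x y : F i) {γ δ : F j → F j → Prop}
    (hγ : IsCong (dot j) (m j) γ) (hδ : IsCong (dot j) (m j) δ)
    (hγδ : PrimeCov (IsCong (dot j) (m j)) γ δ) {𝒢 : Set (∀ l, F l → F l)}
    (h𝒢 : ∀ g ∈ 𝒢, RPol dot m R g)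
    (hleft : ∀ h ∈ FixesPairAt dot m R i α x y, ∀ g ∈ 𝒢, (fun l z => h l (g l z)) ∈ 𝒢)
    (hright : ∀ g ∈ 𝒢, ∀ s, RPol dot m R s → (fun l z => g l (s l z)) ∈ 𝒢) :
    CollapseRel dot m R 𝒢 i α x y j γ δ = γ ∨ CollapseRel dot m R 𝒢 i α x y j γ δ = δ := by
  set K := CollapseRel dot m R 𝒢 i α x y j γ δ
  have hid := id_mem_fixesPairAt (R := R) hα x y
  have hequiv : Equivalence K := by
    refine ⟨fun u => ⟨hδ.1.refl u, fun g _ => ⟨_, hid, hγ.1.refl _⟩⟩,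
      fun huv => ⟨hδ.1.symm huv.1, fun g hg => ?_⟩,
      fun huv hvw => ⟨hδ.1.trans huv.1 hvw.1, fun g hg => ?_⟩⟩
    · obtain ⟨h, hh, hγuv⟩ := huv.2 g hg
      exact ⟨h, hh, hγ.1.symm hγuv⟩
    · obtain ⟨h, hh, hγuv⟩ := huv.2 g hg
      obtain ⟨h', hh', hγvw⟩ := hvw.2 _ (hleft h hh g hg)
      exact ⟨_, comp_mem_fixesPairAt hα hh' hh, hγ.1.trans (hh'.1.map_rel hγ hγuv) hγvw⟩
  have hstable : ∀ s, RPol dot m R s → ∀ u v, K u v → K (s j u) (s j v) :=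
    fun s hs _ _ huv => ⟨hs.map_rel hδ huv.1, fun g hg => huv.2 _ (hright g hg s hs)⟩
  have hle : RelLE γ K := fun u v huv =>
    ⟨hγδ.1 u v huv, fun g hg => ⟨_, hid, (h𝒢 g hg).map_rel hγ huv⟩⟩
  exact hγδ.2.2 K (isCong_of_forall_rpol hR hequiv hstable) hle fun _ _ h => h.1

theorem exists_forall_not_of_not_collapseRel {𝒢 : Set (∀ l, F l → F l)}
    {α : F i → F i → Prop} {x y : F i} {γ δ : F j → F j → Prop} {u v : F j} (huv : δ u v)
    (h : ¬ CollapseRel dot m R 𝒢 i α x y j γ δ u v) :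
    ∃ g ∈ 𝒢, ∀ h ∈ FixesPairAt dot m R i α x y, ¬ γ (h j (g j u)) (h j (g j v)) := by
  simpa [CollapseRel, huv] using h

/-- The correction `w ↦ m(w, g'(w), g'(z))` with `g' = g · T` for a top element `T` and
`z[i] = x`: at `i` it fixes `x` and `y` modulo `α`, while at `j` it is constant on fixed
points of `g` in the top block. -/
theorem exists_fixesPairAt_eq [∀ l, Fintype (F l)] (hsbm : ∀ l, IsSBM (dot l) (m l) (σ l))
    (hR : SubdirectProd dot m R) {α : F i → F i → Prop} (hα : IsCong (dot i) (m i) α)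
    {x y : F i} (hx : InMax (dot i) (σ i) x) (hy : InMax (dot i) (σ i) y)
    {g : ∀ l, F l → F l} (hg : RPol dot m R g) (hgxy : α (g i x) (g i y))
    {u v : F j} (hu : InMax (dot j) (σ j) u) (hv : InMax (dot j) (σ j) v)
    (hgu : g j u = u) (hgv : g j v = v) :
    ∃ h ∈ FixesPairAt dot m R i α x y, h j u = h j v := by
  obtain ⟨T, hT, hTmax⟩ := exists_mem_forall_inMax hsbm hR
  obtain ⟨z, hz, hzx⟩ := hR.2.2.2 i x
  set g' : ∀ l, F l → F l := fun l w => dot l (g l w) (T l)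
  have hg' : RPol dot m R g' := RPol.dotc hg (RPol.const T hT)
  have hg'max : ∀ l w, InMax (dot l) (σ l) (g' l w) := fun l w => (hsbm l).inMax_dot _ (hTmax l)
  have hg'u : g' j u = u := by
    simp only [g', hgu]
    exact (hsbm j).dot_eq_of_inMax hu (hTmax j)
  have hg'v : g' j v = v := by
    simp only [g', hgv]
    exact (hsbm j).dot_eq_of_inMax hv (hTmax j)
  set k := fun l => g' l (z l)
  have hki : k i = g' i x := by simp only [k, hzx]
  refine ⟨fun l w => m l w (g' l w) (k l),
    ⟨RPol.mc RPol.id hg' (RPol.const k (hg'.apply_mem hR hz)), ?_, ?_⟩, ?_⟩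
  · show α (m i x (g' i x) (k i)) x
    rw [hki, (hsbm i).m_right_eq_of_inMax hx (hg'max i x)]
    exact hα.1.refl x
  · show α (m i y (g' i y) (k i)) y
    have hg'yx : α (g' i y) (k i) := hki ▸ hα.2.1 _ _ _ _ (hα.1.symm hgxy) (hα.1.refl _)
    have := hα.2.2 _ _ _ _ _ _ (hα.1.refl y) hg'yx (hα.1.refl (k i))
    rwa [(hsbm i).m_right_eq_of_inMax hy (hg'max i _)] at this
  · show m j u (g' j u) (k j) = m j v (g' j v) (k j)
    rw [hg'u, hg'v, (hsbm j).m_left_eq_of_inMax (hg'max j _) hu,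
      (hsbm j).m_left_eq_of_inMax (hg'max j _) hv]

theorem collapseRel_collapsesAt_eq [∀ l, Fintype (F l)] (hsbm : ∀ l, IsSBM (dot l) (m l) (σ l))
    (hR : SubdirectProd dot m R) {α β : F i → F i → Prop} (hα : IsCong (dot i) (m i) α)
    (hβ : IsCong (dot i) (m i) β) (hβθ : RelLE β (ThetaA (dot i) (σ i))) {x y : F i}
    (hxy : β x y) (hnxy : ¬ α x y) {γ δ : F j → F j → Prop} (hj : InIR dot m σ j γ δ) :
    CollapseRel dot m R (CollapsesAt dot m R i α β) i α x y j γ δ = δ := by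
  obtain ⟨hγ, hδ, hγδ, hδθ⟩ := hj
  obtain ⟨hx, hy⟩ := inMax_of_rel_not_rel hα.1.refl hβθ hxy hnxy
  set 𝒢 := CollapsesAt dot m R i α β
  refine (collapseRel_eq_or_eq hR hα x y hγ hδ hγδ (fun g hg => hg.1)
    (fun h hh g hg => rpol_comp_mem_collapsesAt hα hh.1 hg)
    (fun g hg s hs => comp_rpol_mem_collapsesAt hβ hg hs)).resolve_left fun hK => ?_
  set B : Set (F j × F j) :=
    {P | δ P.1 P.2 ∧ ∀ h ∈ FixesPairAt dot m R i α x y, ¬ γ (h j P.1) (h j P.2)}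
  have hBγ : ∀ P ∈ B, ¬ γ P.1 P.2 := fun P hP => hP.2 _ (id_mem_fixesPairAt hα x y)
  have hB : ∀ u v, δ u v → ¬ γ u v → ∃ g ∈ 𝒢, (g j u, g j v) ∈ B := by
    intro u v huv hnuv
    obtain ⟨g, hg, hgB⟩ := exists_forall_not_of_not_collapseRel huv (hK ▸ hnuv)
    exact ⟨g, hg, hg.1.map_rel hδ huv, hgB⟩
  set G : Set (F j × F j → F j × F j) := (fun g => Prod.map (g j) (g j)) '' 𝒢
  have hGcomp : ∀ f ∈ G, ∀ g ∈ G, f ∘ g ∈ G := by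
    rintro _ ⟨f, hf, rfl⟩ _ ⟨g, hg, rfl⟩
    exact ⟨_, comp_rpol_mem_collapsesAt hβ hf hg.1, rfl⟩
  obtain ⟨u, v, huv, hnuv⟩ := exists_rel_not_rel_of_primeCov hγδ
  obtain ⟨P, hPB, _, ⟨g, hg, rfl⟩, hfix⟩ := exists_mem_fixed_of_forall_exists_mapsTo hGcomp
    ((hB u v huv hnuv).elim fun _ h => ⟨_, h.2⟩)
    fun P hP => (hB P.1 P.2 hP.1 (hBγ P hP)).elim fun g h => ⟨_, ⟨g, h.1, rfl⟩, h.2⟩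
  obtain ⟨hu, hv⟩ := inMax_of_rel_not_rel hγ.1.refl hδθ hPB.1 (hBγ P hPB)
  obtain ⟨h, hh, heq⟩ := exists_fixesPairAt_eq hsbm hR hα hx hy hg.1 (hg.2 x y hxy) hu hv
    (congrArg Prod.fst hfix) (congrArg Prod.snd hfix)
  exact hPB.2 h hh (heq ▸ hγ.1.refl _)

theorem collapseRel_rpol_eq [∀ l, Fintype (F l)] (hsbm : ∀ l, IsSBM (dot l) (m l) (σ l))
    (hR : SubdirectProd dot m R) {α β : F i → F i → Prop} (hα : IsCong (dot i) (m i) α)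
    (hβ : IsCong (dot i) (m i) β) (hβθ : RelLE β (ThetaA (dot i) (σ i))) {x y : F i}
    (hxy : β x y) (hnxy : ¬ α x y) {γ δ : F j → F j → Prop} (hj : InIR dot m σ j γ δ)
    {a : ∀ l, F l} (ha : a ∈ R) (hai : PolMaps (dot i (a i)) β α)
    (haj : IsSplit (dot j) γ δ (a j)) :
    CollapseRel dot m R {p | RPol dot m R p} i α x y j γ δ = δ := by
  refine (collapseRel_eq_or_eq hR hα x y hj.1 hj.2.1 hj.2.2.1 (fun _ hg => hg)
    (fun h hh g hg => hh.1.comp hg) (fun g hg s hs => hg.comp hs)).resolve_left fun hK => ?_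
  obtain ⟨u, v, huv, hnuv⟩ := haj
  have hauv : δ (dot j (a j) u) (dot j (a j) v) := hj.2.1.2.1 _ _ _ _ (hj.2.1.1.refl _) huv
  obtain ⟨p, hp, hpN⟩ := exists_forall_not_of_not_collapseRel hauv (hK ▸ hnuv)
  have hg : (fun l z => p l (dot l (a l) z)) ∈ CollapsesAt dot m R i α β :=
    rpol_comp_mem_collapsesAt hα hp ⟨RPol.dotc (RPol.const a ha) RPol.id, hai⟩
  rw [← collapseRel_collapsesAt_eq hsbm hR hα hβ hβθ hxy hnxy hj] at hauv
  obtain ⟨h, hh, hγ⟩ := hauv.2 _ hg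
  -- `a · (a · w) = a · w`
  simp only [(hsbm j).2.2.2.2.2.2] at hγ
  exact hpN h hh hγ

theorem sepIn_of_not_split_of_split [∀ l, Fintype (F l)] (hsbm : ∀ l, IsSBM (dot l) (m l) (σ l))
    (hR : SubdirectProd dot m R) {α β : F i → F i → Prop} {γ δ : F j → F j → Prop}
    (hi : InIR dot m σ i α β) (hj : InIR dot m σ j γ δ) {a : ∀ l, F l} (ha : a ∈ R)
    (hai : ¬ IsSplit (dot i) α β (a i)) (haj : IsSplit (dot j) γ δ (a j)) :
    SepIn dot m R i α β j γ δ := by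
  obtain ⟨hα, hβ, hαβ, hβθ⟩ := hi
  obtain ⟨x, y, hxy, hnxy⟩ := exists_rel_not_rel_of_primeCov hαβ
  have hK := collapseRel_rpol_eq hsbm hR hα hβ hβθ hxy hnxy hj ha
    (fun u v huv => not_not.1 fun h => hai ⟨u, v, huv, h⟩) haj
  obtain ⟨_, ⟨q, hq, rfl⟩, hqδ⟩ := exists_mem_forall_rel_of_forall_exists
    (α := γ) (β := δ) (N := (fun h => h j) '' FixesPairAt dot m R i α x y)
    ⟨_, id_mem_fixesPairAt hα x y, rfl⟩
    (by rintro _ ⟨f, hf, rfl⟩ _ ⟨g, hg, rfl⟩; exact ⟨_, comp_mem_fixesPairAt hα hf hg, rfl⟩)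
    (by rintro _ ⟨f, hf, rfl⟩; exact fun _ _ => hf.1.map_rel hj.1)
    (by rintro _ ⟨f, hf, rfl⟩; exact fun _ _ => hf.1.map_rel hj.2.1)
    fun u v huv => by
      obtain ⟨h, hh, hγ⟩ := (hK.symm ▸ huv : CollapseRel dot m R _ i α x y j γ δ u v).2 _ RPol.id
      exact ⟨_, ⟨h, hh, rfl⟩, hγ⟩
  refine ⟨q, hq.1, fun hmaps => hnxy ?_, hqδ⟩
  exact hα.1.trans (hα.1.symm hq.2.1) (hα.1.trans (hmaps x y hxy) hq.2.2)

theorem sepIn_of_split_of_not_split {α β : F i → F i → Prop} {γ δ : F j → F j → Prop}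
    {a : ∀ l, F l} (ha : a ∈ R) (hai : IsSplit (dot i) α β (a i))
    (haj : ¬ IsSplit (dot j) γ δ (a j)) : SepIn dot m R i α β j γ δ := by
  obtain ⟨u, v, huv, hnuv⟩ := hai
  exact ⟨fun l z => dot l (a l) z, RPol.dotc (RPol.const a ha) RPol.id,
    fun hmaps => hnuv (hmaps u v huv), fun u v huv => not_not.1 fun h => haj ⟨u, v, huv, h⟩⟩

end Separation

theorem not_aligned_implies_separated_general {n : ℕ} {F : Fin n → Type*}
    [∀ i, Fintype (F i)]
    (dot : ∀ i, F i → F i → F i) (m : ∀ i, F i → F i → F i → F i)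
    (σ : ∀ i, F i → F i → Prop)
    (hsbm : ∀ i, IsSBM (dot i) (m i) (σ i))
    (R : Set (∀ i, F i)) (hR : SubdirectProd dot m R)
    (α β : ∀ l, F l → F l → Prop)
    (hαβ : ∀ l, InIR dot m σ l (α l) (β l))
    (i j : Fin n)
    (hnal : ¬ ∀ x ∈ R,
      (IsSplit (dot i) (α i) (β i) (x i) ↔ IsSplit (dot j) (α j) (β j) (x j))) :
    SepIn dot m R i (α i) (β i) j (α j) (β j) := by
  obtain ⟨a, ha, hnot⟩ : ∃ a ∈ R,
      ¬ (IsSplit (dot i) (α i) (β i) (a i) ↔ IsSplit (dot j) (α j) (β j) (a j)) := by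
    simpa only [not_forall, exists_prop] using hnal
  by_cases hai : IsSplit (dot i) (α i) (β i) (a i)
  · exact sepIn_of_split_of_not_split ha hai fun haj => hnot (iff_of_true hai haj)
  · refine sepIn_of_not_split_of_split hsbm hR (hαβ i) (hαβ j) ha hai ?_
    exact not_not.1 fun haj => hnot (iff_of_false hai haj)

/-- If coordinates `i ≠ j` of a subdirect product `R` of SBM algebras are not
`ᾱβ̄`-aligned (for given prime intervals `α_l ≺ β_l ≤ θ_{A_l}`), then `(α_i,β_i)`
can be separated from `(α_j,β_j)` in `R`. -/
theorem not_aligned_implies_separated {n : ℕ} {F : Fin n → Type*}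
    [∀ i, Fintype (F i)] [∀ i, Nonempty (F i)]
    (dot : ∀ i, F i → F i → F i) (m : ∀ i, F i → F i → F i → F i)
    (σ : ∀ i, F i → F i → Prop)
    (hsbm : ∀ i, IsSBM (dot i) (m i) (σ i))
    (R : Set (∀ i, F i)) (hR : SubdirectProd dot m R)
    (α β : ∀ l, F l → F l → Prop)
    (hαβ : ∀ l, InIR dot m σ l (α l) (β l))
    (i j : Fin n) (hij : i ≠ j)
    (hnal : ¬ ∀ x ∈ R,
      (IsSplit (dot i) (α i) (β i) (x i) ↔ IsSplit (dot j) (α j) (β j) (x j))) :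
    SepIn dot m R i (α i) (β i) j (α j) (β j) :=
  not_aligned_implies_separated_general dot m σ hsbm R hR α β hαβ i j hnal

end SBMPaper
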